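/- Let N ∈ ℤ_{≥0} and suppose b − λ − N + 2 = 0. Then for every m̄ ∈ ℤ_{≥0}^{n+1} with |m̄| ≤ N − 1, the column vector X ∈ R^{n+1} with entries X_j := a_j^{−1}·(m_j+1)·σ_j^{−1}(P'_{m̄+ε_j}(S,a)) for 1 ≤ j ≤ n+1 satisfies A(λ,b,S,N)·X = 0, i.e. ∑_{j=1}^{n+1} A_{ij}·X_j = 0 in R for every 1 ≤ i ≤ n+1. -/

import Mathlib

open MvPolynomial

/-- The generators `h_1, …, h_n` of `R = ℂ[h_1,…,h_n]`, together with
`h_{n+1} := -(h_1 + ⋯ + h_n)`.  Indices: `i : Fin (n+1)` with `(i : ℕ) < n`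
corresponding to `h_1, …, h_n` and `i = Fin.last n` to `h_{n+1}`. -/
noncomputable def Hp (n : ℕ) (i : Fin (n + 1)) : MvPolynomial (Fin n) ℂ :=
  if h : (i : ℕ) < n then X ⟨i, h⟩ else -∑ j : Fin n, X j

/-- The automorphism `σ_i` of `R` determined by `σ_i(h_k) = h_k - δ_{k,i}` for `1 ≤ i ≤ n`,
and `σ_{n+1} = id`. -/
noncomputable def sigma (n : ℕ) (i : Fin (n + 1)) :
    MvPolynomial (Fin n) ℂ ≃ₐ[ℂ] MvPolynomial (Fin n) ℂ :=
  if h : (i : ℕ) < n then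
    AlgEquiv.ofAlgHom
      (aeval fun k => X k - if k = ⟨i, h⟩ then 1 else 0)
      (aeval fun k => X k + if k = ⟨i, h⟩ then 1 else 0)
      (by ext k : 1; by_cases hk : k = ⟨i, h⟩ <;> simp [hk])
      (by ext k : 1; by_cases hk : k = ⟨i, h⟩ <;> simp [hk])
  else AlgEquiv.refl

/-- The scalar `a^{m̄}/m̄!`. -/
noncomputable def coef (n : ℕ) (a : Fin (n + 1) → ℂ) (m : Fin (n + 1) → ℕ) : ℂ :=
  (∏ j, a j ^ m j) / ((∏ j, (m j).factorial : ℕ) : ℂ)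

/-- `P_{m̄}(S,a) = (a^{m̄}/m̄!) ∏_{s ∉ S} ∏_{k=1}^{m_s} (h_s - b - k)`. -/
noncomputable def Pm (n : ℕ) (b : ℂ) (S : Finset (Fin (n + 1))) (a : Fin (n + 1) → ℂ)
    (m : Fin (n + 1) → ℕ) : MvPolynomial (Fin n) ℂ :=
  coef n a m • ∏ s ∈ Sᶜ, ∏ k ∈ Finset.range (m s), (Hp n s - C (b + k + 1))

/-- `P'_{m̄}(S,a) = (a^{m̄}/m̄!) ∏_{s∉S, s≠n+1} ∏_{k=1}^{m_s}(h_s - b - k) ⋅ C ⋅`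
`∏_{t=1}^{m_{n+1}}(h_{n+1} + nb - t + 1)`, where
`C = ∏_{r=1}^{N-m_{n+1}}(h_{n+1} - b - 1 + r)` if `n+1 ∈ S` and `C = 1` otherwise. -/
noncomputable def P' (n : ℕ) (b : ℂ) (S : Finset (Fin (n + 1))) (a : Fin (n + 1) → ℂ)
    (N : ℕ) (m : Fin (n + 1) → ℕ) : MvPolynomial (Fin n) ℂ :=
  coef n a m •
    ((∏ s ∈ Sᶜ.erase (Fin.last n), ∏ k ∈ Finset.range (m s), (Hp n s - C (b + k + 1)))
      * (if Fin.last n ∈ S then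
            ∏ r ∈ Finset.range (N - m (Fin.last n)), (Hp n (Fin.last n) - C (b - r))
          else 1)
      * ∏ t ∈ Finset.range (m (Fin.last n)), (Hp n (Fin.last n) + C ((n : ℂ) * b - t)))

/-- `Δ_{m̄}(S,a) = (a^{m̄}/m̄!) ∏_{s∉S} ∏_{k=1}^{m_s}(h_s - b - k) ⋅`
`∏_{r=2}^{N-m_{n+1}}(h_{n+1} - b - 2 + r) ⋅ ∏_{t=1}^{m_{n+1}}(h_{n+1} + nb - t)`. -/
noncomputable def Δm (n : ℕ) (b : ℂ) (S : Finset (Fin (n + 1))) (a : Fin (n + 1) → ℂ)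
    (N : ℕ) (m : Fin (n + 1) → ℕ) : MvPolynomial (Fin n) ℂ :=
  coef n a m •
    ((∏ s ∈ Sᶜ, ∏ k ∈ Finset.range (m s), (Hp n s - C (b + k + 1)))
      * (∏ r ∈ Finset.range (N - m (Fin.last n) - 1), (Hp n (Fin.last n) - C (b - r)))
      * ∏ t ∈ Finset.range (m (Fin.last n)), (Hp n (Fin.last n) + C ((n : ℂ) * b - t - 1)))

/-- `Θ_{m̄}(S,a) = (a^{m̄}/m̄!) ∏_{s∉S, s≠n+1} ∏_{k=1}^{m_s}(h_s - b - k) ⋅`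
`∏_{k=1}^{m_{n+1}}(h_{n+1} - b - k - 1)`. -/
noncomputable def Θm (n : ℕ) (b : ℂ) (S : Finset (Fin (n + 1))) (a : Fin (n + 1) → ℂ)
    (m : Fin (n + 1) → ℕ) : MvPolynomial (Fin n) ℂ :=
  coef n a m •
    ((∏ s ∈ Sᶜ.erase (Fin.last n), ∏ k ∈ Finset.range (m s), (Hp n s - C (b + k + 1)))
      * ∏ k ∈ Finset.range (m (Fin.last n)), (Hp n (Fin.last n) - C (b + k + 2)))

/-- `Υ_{m̄}(S,a) = (a^{m̄}/m̄!) ∏_{s∉S, s≠n+1} ∏_{k=1}^{m_s}(h_s - b - k) ⋅`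
`∏_{t=1}^{m_{n+1}}(h_{n+1} + nb - t)`. -/
noncomputable def Υm (n : ℕ) (b : ℂ) (S : Finset (Fin (n + 1))) (a : Fin (n + 1) → ℂ)
    (m : Fin (n + 1) → ℕ) : MvPolynomial (Fin n) ℂ :=
  coef n a m •
    ((∏ s ∈ Sᶜ.erase (Fin.last n), ∏ k ∈ Finset.range (m s), (Hp n s - C (b + k + 1)))
      * ∏ t ∈ Finset.range (m (Fin.last n)), (Hp n (Fin.last n) + C ((n : ℂ) * b - t - 1)))

/-- `h̄_i = h_i - δ_{i,n+1}`. -/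
noncomputable def Hbar (n : ℕ) (i : Fin (n + 1)) : MvPolynomial (Fin n) ℂ :=
  Hp n i - if i = Fin.last n then 1 else 0

/-- The `(n+1) × (n+1)` matrix `A(λ,b,S,N)` with entries in `R`:
`A_{ii} = h̄_i - λ - N + 2` and, for `i ≠ j`,
`A_{ij} = (δ_{i∈S} + δ_{i∉S}(h̄_i - b)) (δ_{j∈S}(h̄_j - b) + δ_{j∉S})`. -/
noncomputable def Amat (n : ℕ) (lam b : ℂ) (S : Finset (Fin (n + 1))) (N : ℕ) :
    Matrix (Fin (n + 1)) (Fin (n + 1)) (MvPolynomial (Fin n) ℂ) :=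
  fun i j =>
    if i = j then Hbar n i - C (lam + N - 2)
    else (if i ∈ S then 1 else Hbar n i - C b) * (if j ∈ S then Hbar n j - C b else 1)

/-!
When `λ + N - 2 = b` the diagonal entries of `A` factor like the off-diagonal ones, so
`A = u vᵀ` with `uᵢ = δ_{i∈S} + δ_{i∉S}(h̄ᵢ - b)` and `vⱼ = δ_{j∈S}(h̄ⱼ - b) + δ_{j∉S}`, and it
suffices to show `v ⬝ X = 0`. Since `σⱼ⁻¹` raises `hⱼ` and lowers `h_{n+1}` by one, each product
in `P'_{m̄+εⱼ}` gains or loses one boundary factor; after dividing out `a^{m̄}/m̄!`, the `j`-th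
summand of `v ⬝ X` is `(hⱼ - b) F` for `j ≤ n` and `(h_{n+1} + nb) F` for `j = n + 1`, with the
same polynomial `F`. They cancel because `∑_{j ≤ n} (hⱼ - b) = -(h_{n+1} + nb)`.
-/

open Finset

section Generators

variable {n : ℕ}

theorem Hp_castSucc (j : Fin n) : Hp n j.castSucc = X j := by
  simp [Hp]

theorem Hp_last : Hp n (Fin.last n) = -∑ j, X j := by
  simp [Hp]

theorem Hbar_castSucc (j : Fin n) : Hbar n j.castSucc = X j := by
  simp [Hbar, Hp_castSucc, (Fin.castSucc_lt_last j).ne]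

theorem Hbar_last : Hbar n (Fin.last n) = Hp n (Fin.last n) - 1 := by
  simp [Hbar]

theorem sum_X_sub_C (b : ℂ) :
    ∑ j : Fin n, (X j - C b : MvPolynomial (Fin n) ℂ) = -(Hp n (Fin.last n) + C (n * b)) := by
  simp only [sum_sub_distrib, sum_const, card_univ, Fintype.card_fin, nsmul_eq_mul,
    Hp_last, map_mul, map_natCast]
  ring

theorem sigma_last : sigma n (Fin.last n) = AlgEquiv.refl := by
  simp [sigma]

theorem sigma_symm_C (j : Fin (n + 1)) (c : ℂ) : (sigma n j).symm (C c) = C c :=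
  (sigma n j).symm.commutes c

theorem sigma_castSucc_symm_X (j k : Fin n) :
    (sigma n j.castSucc).symm (X k) = X k + if k = j then 1 else 0 := by
  simp [sigma, Fin.ext_iff]

theorem sigma_castSucc_symm_Hp_last (j : Fin n) :
    (sigma n j.castSucc).symm (Hp n (Fin.last n)) = Hp n (Fin.last n) - 1 := by
  simp [Hp_last, map_sum, sigma_castSucc_symm_X, sum_add_distrib]
  ring

end Generators

theorem Finset.prod_range_succ_comp_add {R M : Type*} [Semiring R] [CommMonoid M] (f : R → M)
    (c : R) (k : ℕ) : ∏ t ∈ range (k + 1), f (c + t) = f c * ∏ t ∈ range k, f (c + t + 1) := by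
  rw [prod_range_succ', mul_comm]
  simp [add_assoc]

theorem Finset.prod_range_succ_comp_sub {R M : Type*} [Ring R] [CommMonoid M] (f : R → M)
    (c : R) (k : ℕ) : ∏ t ∈ range (k + 1), f (c - t) = f c * ∏ t ∈ range k, f (c - 1 - t) := by
  rw [prod_range_succ', mul_comm]
  simp [sub_sub, add_comm]

section Factors

variable {n : ℕ} (b : ℂ) (S : Finset (Fin (n + 1))) (N : ℕ)

noncomputable def finiteFactor (m : Fin (n + 1) → ℕ) : MvPolynomial (Fin n) ℂ :=
  ∏ s ∈ Sᶜ.erase (Fin.last n), ∏ k ∈ range (m s), (Hp n s - C (b + k + 1))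

noncomputable def capFactor (k : ℕ) : MvPolynomial (Fin n) ℂ :=
  if Fin.last n ∈ S then ∏ r ∈ range (N - k), (Hp n (Fin.last n) - C (b - r)) else 1

variable (n) in
noncomputable def lastFactor (c : ℂ) (k : ℕ) : MvPolynomial (Fin n) ℂ :=
  ∏ t ∈ range k, (Hp n (Fin.last n) + C (c - t))

theorem sigma_castSucc_symm_prod_castSucc (j k : Fin n) (p : ℕ) :
    (sigma n j.castSucc).symm
        (∏ t ∈ range (p + if k = j then 1 else 0), (Hp n k.castSucc - C (b + t + 1)))
      = (if k = j then X j - C b else 1) * ∏ t ∈ range p, (Hp n k.castSucc - C (b + t + 1)) := by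
  rw [map_prod, Hp_castSucc]
  split_ifs with hkj
  · subst hkj
    have hshift : ∀ t : ℕ, (sigma n k.castSucc).symm (X k - C (b + t + 1)) = X k - C (b + t) := by
      intro t
      simp only [map_sub, sigma_castSucc_symm_X, sigma_symm_C, if_pos, map_add, map_one]
      ring
    simp only [hshift]
    exact prod_range_succ_comp_add (fun z => X k - C z) b p
  · simp [sigma_castSucc_symm_X, sigma_symm_C, hkj]

theorem sigma_castSucc_symm_finiteFactor (m : Fin (n + 1) → ℕ) (j : Fin n) :
    (sigma n j.castSucc).symm (finiteFactor b S fun l => m l + if l = j.castSucc then 1 else 0)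
      = (if j.castSucc ∈ S then 1 else X j - C b) * finiteFactor b S m := by
  rw [finiteFactor, map_prod, prod_congr rfl (g := fun s =>
    (if s = j.castSucc then X j - C b else 1) * ∏ k ∈ range (m s), (Hp n s - C (b + k + 1)))]
  · rw [prod_mul_distrib, prod_ite_eq']
    simp [finiteFactor, (Fin.castSucc_lt_last j).ne]
  · intro s hs
    obtain ⟨k, rfl⟩ := Fin.exists_castSucc_eq.2 (ne_of_mem_erase hs)
    simpa using sigma_castSucc_symm_prod_castSucc b j k (m k.castSucc)

theorem finiteFactor_add_single_last (m : Fin (n + 1) → ℕ) :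
    (finiteFactor b S fun l => m l + if l = Fin.last n then 1 else 0) = finiteFactor b S m :=
  prod_congr rfl fun s hs => by simp [ne_of_mem_erase hs]

theorem sigma_castSucc_symm_capFactor (j : Fin n) (k : ℕ) :
    (sigma n j.castSucc).symm (capFactor b S N k) = capFactor (b + 1) S N k := by
  unfold capFactor
  split_ifs
  · rw [map_prod]
    refine prod_congr rfl fun r _ => ?_
    simp only [map_sub, sigma_castSucc_symm_Hp_last, sigma_symm_C, map_add, map_one]
    ring
  · exact map_one _

theorem capFactor_succ {k : ℕ} (hk : k < N) :
    (if Fin.last n ∈ S then Hbar n (Fin.last n) - C b else 1) * capFactor b S N (k + 1)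
      = capFactor (b + 1) S N k := by
  unfold capFactor
  split_ifs
  · obtain ⟨p, hp⟩ : ∃ p, N - k = p + 1 := ⟨N - (k + 1), by omega⟩
    have hNp : N - (k + 1) = p := by omega
    rw [hp, hNp, prod_range_succ_comp_sub (fun z => Hp n (Fin.last n) - C z), Hbar_last]
    simp only [add_sub_cancel_right, map_add, map_one]
    ring
  · exact one_mul 1

theorem sigma_castSucc_symm_lastFactor (j : Fin n) (c : ℂ) (k : ℕ) :
    (sigma n j.castSucc).symm (lastFactor n c k) = lastFactor n (c - 1) k := by
  rw [lastFactor, map_prod]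
  refine prod_congr rfl fun t _ => ?_
  simp only [map_add, map_sub, sigma_castSucc_symm_Hp_last, sigma_symm_C, map_one]
  ring

theorem lastFactor_succ (c : ℂ) (k : ℕ) :
    lastFactor n c (k + 1) = (Hp n (Fin.last n) + C c) * lastFactor n (c - 1) k :=
  prod_range_succ_comp_sub (fun z => Hp n (Fin.last n) + C z) c k

end Factors

section Summands

variable {n : ℕ} (b : ℂ) (S : Finset (Fin (n + 1))) (N : ℕ) (m : Fin (n + 1) → ℕ)

noncomputable def unscaledP' : MvPolynomial (Fin n) ℂ :=
  finiteFactor b S m * capFactor b S N (m (Fin.last n)) * lastFactor n (n * b) (m (Fin.last n))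

theorem P'_eq_coef_smul (a : Fin (n + 1) → ℂ) :
    P' n b S a N m = coef n a m • unscaledP' b S N m :=
  rfl

theorem coef_add_single (a : Fin (n + 1) → ℂ) (ha : ∀ j, a j ≠ 0) (j : Fin (n + 1)) :
    (a j)⁻¹ * (m j + 1 : ℂ) * coef n a (fun l => m l + if l = j then 1 else 0) = coef n a m := by
  have hpow : ∏ l, a l ^ (m l + if l = j then 1 else 0) = a j * ∏ l, a l ^ m l := by
    simp only [pow_add, prod_mul_distrib, pow_ite, pow_one, pow_zero, prod_ite_eq', mem_univ,
      if_true, mul_comm]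
  have hfact :
      ∏ l, (m l + if l = j then 1 else 0).factorial = (m j + 1) * ∏ l, (m l).factorial := by
    rw [← mul_prod_erase _ _ (mem_univ j), ← mul_prod_erase _ _ (mem_univ j), if_pos rfl,
      prod_congr rfl fun l hl => by rw [if_neg (ne_of_mem_erase hl), add_zero],
      Nat.factorial_succ, mul_assoc]
  have hfact0 : ((∏ l, (m l).factorial : ℕ) : ℂ) ≠ 0 :=
    Nat.cast_ne_zero.2 (prod_ne_zero_iff.2 fun l _ => (m l).factorial_ne_zero)
  have hmj : (m j + 1 : ℂ) ≠ 0 := Nat.cast_add_one_ne_zero (m j)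
  rw [coef, coef, hpow, hfact]
  push_cast
  field_simp [ha j]

theorem castSucc_summand (j : Fin n) :
    (if j.castSucc ∈ S then Hbar n j.castSucc - C b else 1) *
        (sigma n j.castSucc).symm (unscaledP' b S N fun l => m l + if l = j.castSucc then 1 else 0)
      = (X j - C b) *
          (finiteFactor b S m * capFactor (b + 1) S N (m (Fin.last n)) *
            lastFactor n (n * b - 1) (m (Fin.last n))) := by
  have hjL : Fin.last n ≠ j.castSucc := (Fin.castSucc_lt_last j).ne'
  simp only [unscaledP', map_mul, sigma_castSucc_symm_finiteFactor, if_neg hjL, add_zero,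
    sigma_castSucc_symm_capFactor, sigma_castSucc_symm_lastFactor, Hbar_castSucc]
  split_ifs <;> ring

theorem last_summand (hm : m (Fin.last n) < N) :
    (if Fin.last n ∈ S then Hbar n (Fin.last n) - C b else 1) *
        (sigma n (Fin.last n)).symm
          (unscaledP' b S N fun l => m l + if l = Fin.last n then 1 else 0)
      = (Hp n (Fin.last n) + C (n * b)) *
          (finiteFactor b S m * capFactor (b + 1) S N (m (Fin.last n)) *
            lastFactor n (n * b - 1) (m (Fin.last n))) := by
  rw [sigma_last, AlgEquiv.refl_symm, AlgEquiv.coe_refl, id, unscaledP',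
    finiteFactor_add_single_last]
  simp only [if_pos, lastFactor_succ, ← capFactor_succ b S N hm]
  ring

theorem sum_summand_eq_zero (hm : m (Fin.last n) < N) :
    ∑ j, (if j ∈ S then Hbar n j - C b else 1) *
        (sigma n j).symm (unscaledP' b S N fun l => m l + if l = j then 1 else 0) = 0 := by
  rw [Fin.sum_univ_castSucc, sum_congr rfl fun j _ => castSucc_summand b S N m j,
    last_summand b S N m hm, ← sum_mul, sum_X_sub_C]
  ring

end Summands

theorem Amat_apply_of_eq {n : ℕ} {lam b : ℂ} {N : ℕ} (hb : lam + N - 2 = b)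
    (S : Finset (Fin (n + 1))) (i j : Fin (n + 1)) :
    Amat n lam b S N i j
      = (if i ∈ S then 1 else Hbar n i - C b) * (if j ∈ S then Hbar n j - C b else 1) := by
  rw [Amat, hb]
  split_ifs <;> simp_all

theorem statement18_general (n : ℕ) (lam b : ℂ) (S : Finset (Fin (n + 1)))
    (a : Fin (n + 1) → ℂ) (ha : ∀ j, a j ≠ 0)
    (N : ℕ) (h : b - lam - N + 2 = 0) (m : Fin (n + 1) → ℕ)
    (hm : (∑ j, m j) + 1 ≤ N) (i : Fin (n + 1)) :
    ∑ j, Amat n lam b S N i j *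
        ((a j)⁻¹ * (m j + 1 : ℂ)) •
          (sigma n j).symm (P' n b S a N (fun l => m l + if l = j then 1 else 0))
      = 0 := by
  have hlast : m (Fin.last n) < N :=
    (single_le_sum (fun _ _ => Nat.zero_le _) (mem_univ _)).trans_lt hm
  have hsummand : ∀ j, ((a j)⁻¹ * (m j + 1 : ℂ)) •
      (sigma n j).symm (P' n b S a N (fun l => m l + if l = j then 1 else 0))
        = coef n a m •
          (sigma n j).symm (unscaledP' b S N fun l => m l + if l = j then 1 else 0) := fun j => by
    rw [P'_eq_coef_smul, map_smul, smul_smul, coef_add_single m a ha]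
  have hb : lam + N - 2 = b := by linear_combination -h
  rw [sum_congr rfl fun j _ => by rw [Amat_apply_of_eq hb, hsummand, mul_assoc, mul_smul_comm],
    ← mul_sum, ← smul_sum, sum_summand_eq_zero b S N m hlast, smul_zero, mul_zero]

/-- Lemma: if `b - λ - N + 2 = 0` then, for every `m̄` with `|m̄| ≤ N - 1`, the vector with
entries `X_j = a_j⁻¹ (m_j+1) σ_j⁻¹(P'_{m̄+ε_j}(S,a))` satisfies `A(λ,b,S,N) X = 0`. -/
theorem statement18 (n : ℕ) (hn : 1 ≤ n) (lam b : ℂ) (S : Finset (Fin (n + 1)))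
    (a : Fin (n + 1) → ℂ) (ha : ∀ j, a j ≠ 0) (halast : a (Fin.last n) = 1)
    (N : ℕ) (h : b - lam - N + 2 = 0) (m : Fin (n + 1) → ℕ)
    (hm : (∑ j, m j) + 1 ≤ N) (i : Fin (n + 1)) :
    ∑ j, Amat n lam b S N i j *
        ((a j)⁻¹ * (m j + 1 : ℂ)) •
          (sigma n j).symm (P' n b S a N (fun l => m l + if l = j then 1 else 0))
      = 0 :=
  statement18_general n lam b S a ha N h m hm i
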